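/- arXiv:1601.06215 — 8 statements merged into one kernel-verified Lean document; each statement's English description precedes it below -/
import Mathlib

section
/- Let f, g be square-free monomials in m variables with f ⪯ g, and write f = f* · gcd(f,g), g = g* · gcd(f,g). Then f* ⪯ g*. -/
/-- The partial order `⪯` on square-free monomials (identified with their sets of
variable indices): `S ⪯ T` iff there is a divisor `T'` of `T` of the same degree
as `S` whose increasingly-sorted index sequence dominates that of `S`
componentwise. -/
def preceq {m : ℕ} (S T : Finset (Fin m)) : Prop :=
  ∃ T' ⊆ T, T'.card = S.card ∧
    List.Forall₂ (· ≤ ·) (S.sort (· ≤ ·)) (T'.sort (· ≤ ·))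

/-!
`S ⪯ T` holds iff every up-set `{x | a ≤ x}` contains at least as many elements of `S` as of `T`:
a witness `T'` can always be taken to be the `#S` largest elements of `T`. Passing to `S \ T` and
`T \ S` removes the elements of `S ∩ T` from both sides, which lowers both counts by the same
amount.
-/

namespace List

variable {α : Type*} [Preorder α] [DecidableLE α]

theorem Forall₂.countP_le_countP {l₁ l₂ : List α} (h : Forall₂ (· ≤ ·) l₁ l₂) (a : α) :
    l₁.countP (a ≤ ·) ≤ l₂.countP (a ≤ ·) := by
  induction h with
  | nil => rfl
  | @cons x y _ _ hxy _ ih =>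
    by_cases hax : a ≤ x
    · simpa [hax, hax.trans hxy] using ih
    · simp only [countP_cons, hax, decide_false, Bool.false_eq_true, if_false]
      omega

theorem forall₂_take_of_countP_le {l₁ l₂ : List α} (h₁ : l₁.Pairwise (· ≥ ·))
    (h₂ : l₂.Pairwise (· ≥ ·)) (h : ∀ a, l₁.countP (a ≤ ·) ≤ l₂.countP (a ≤ ·)) :
    Forall₂ (· ≤ ·) l₁ (l₂.take l₁.length) := by
  induction l₁ generalizing l₂ with
  | nil => simp
  | cons x r₁ ih =>
    obtain ⟨hx, hr₁⟩ := pairwise_cons.1 h₁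
    obtain ⟨z, hz, hxz⟩ : ∃ z ∈ l₂, x ≤ z := by
      have := h x
      simp only [countP_cons, le_refl, decide_true] at this
      simpa using Nat.succ_pos _ |>.trans_le this
    obtain _ | ⟨y, r₂⟩ := l₂
    · simp at hz
    obtain ⟨hy, hr₂⟩ := pairwise_cons.1 h₂
    have hxy : x ≤ y := by
      obtain rfl | hz := mem_cons.1 hz
      exacts [hxz, hxz.trans (hy z hz)]
    refine Forall₂.cons hxy (ih hr₁ hr₂ fun a => ?_)
    by_cases hax : a ≤ x
    · simpa [hax, hax.trans hxy] using h a
    · have : r₁.countP (a ≤ ·) = 0 := by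
        simpa using fun z hz haz => hax (haz.trans (hx z hz))
      omega

end List

namespace Finset

variable {α : Type*}

theorem countP_sort (s : Finset α) (r : α → α → Prop) [DecidableRel r] [IsTrans α r]
    [Std.Antisymm r] [Std.Total r] (p : α → Prop) [DecidablePred p] :
    (s.sort r).countP (p ·) = #{x ∈ s | p x} := by
  rw [card, filter_val, ← Multiset.countP_eq_card_filter, ← sort_eq s r, Multiset.coe_countP]

theorem card_filter_sdiff_add_card_filter_inter [DecidableEq α] (s t : Finset α) (p : α → Prop)
    [DecidablePred p] : #{x ∈ s \ t | p x} + #{x ∈ s ∩ t | p x} = #{x ∈ s | p x} := by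
  rw [← card_union_of_disjoint (disjoint_filter_filter (disjoint_sdiff_inter s t)),
    ← filter_union, sdiff_union_inter]

variable [LinearOrder α]

theorem reverse_sort_ge (s : Finset α) : (s.sort (· ≥ ·)).reverse = s.sort (· ≤ ·) := by
  have := (List.toFinset_sort (· ≤ ·) (List.nodup_reverse.2 (sort_nodup s (· ≥ ·)))).2
    (List.pairwise_reverse.2 (pairwise_sort s _))
  rwa [List.toFinset_reverse, sort_toFinset, eq_comm] at this

end Finset

open Finset

theorem preceq_iff_card_filter_le {m : ℕ} {S T : Finset (Fin m)} :
    preceq S T ↔ ∀ a, #{x ∈ S | a ≤ x} ≤ #{x ∈ T | a ≤ x} := by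
  constructor
  · rintro ⟨T', hT'T, -, hST'⟩ a
    calc #{x ∈ S | a ≤ x} = (S.sort (· ≤ ·)).countP (a ≤ ·) := (countP_sort ..).symm
      _ ≤ (T'.sort (· ≤ ·)).countP (a ≤ ·) := hST'.countP_le_countP a
      _ = #{x ∈ T' | a ≤ x} := countP_sort ..
      _ ≤ #{x ∈ T | a ≤ x} := card_le_card (filter_subset_filter _ hT'T)
  · intro h
    set l := (T.sort (· ≥ ·)).take #S
    have hl : List.Forall₂ (· ≤ ·) (S.sort (· ≥ ·)) l := by
      simpa using List.forall₂_take_of_countP_le (pairwise_sort S _) (pairwise_sort T _)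
        (by simpa only [countP_sort] using h)
    have hl_nodup : l.Nodup := (sort_nodup T _).sublist (List.take_sublist _ _)
    have hl_sort : l.toFinset.sort (· ≤ ·) = l.reverse := by
      rw [← List.toFinset_reverse, List.toFinset_sort _ (List.nodup_reverse.2 hl_nodup),
        List.pairwise_reverse]
      exact (pairwise_sort T _).sublist (List.take_sublist _ _)
    refine ⟨l.toFinset, fun x hx => ?_, ?_, ?_⟩
    · exact (mem_sort _).1 (List.mem_of_mem_take (List.mem_toFinset.1 hx))
    · rw [List.toFinset_card_of_nodup hl_nodup, ← hl.length_eq, length_sort]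
    · rw [hl_sort, ← reverse_sort_ge]
      exact List.forall₂_reverse_iff.2 hl

/-- if `f ⪯ g` and `f = f*·gcd(f,g)`, `g = g*·gcd(f,g)`
(i.e. `f* = f \ g`, `g* = g \ f` as index sets), then `f* ⪯ g*`. -/
theorem preceq_sdiff {m : ℕ} (S T : Finset (Fin m)) (h : preceq S T) :
    preceq (S \ T) (T \ S) := by
  rw [preceq_iff_card_filter_le] at h ⊢
  intro a
  have hS := card_filter_sdiff_add_card_filter_inter S T (a ≤ ·)
  have hT := card_filter_sdiff_add_card_filter_inter T S (a ≤ ·)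
  rw [inter_comm] at hT
  have := h a
  omega
end

section
/- If I ⊆ M_m is a decreasing set of monomials, then the complement M_m \ Ǐ of the set of multiplicative complements of elements of I is also a decreasing set. -/
/-- A set of monomials is decreasing when it is downward closed for `⪯`. -/
def Decreasing {m : ℕ} (I : Finset (Finset (Fin m))) : Prop :=
  ∀ f ∈ I, ∀ g, preceq g f → g ∈ I

/-!
`g ⪯ f` holds exactly when, for every threshold `t`, `g` has at most as many variables of index
`≥ t` as `f` does. Complementation turns these counts `c` into `c(M) - c`, so `g ⪯ f` implies
`f̌ ⪯ ǧ`. Hence if `g ⪯ f` and `g ∈ Ǐ`, i.e. `ǧ ∈ I`, then `f̌ ∈ I` because `I` is decreasing,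
i.e. `f ∈ Ǐ`.
-/

open Finset

theorem List.Forall₂.countP_le_countP_s7 {α β : Type*} {R : α → β → Prop} {p : α → Bool}
    {q : β → Bool} (hpq : ∀ a b, R a b → p a → q b) {l₁ : List α} {l₂ : List β}
    (h : List.Forall₂ R l₁ l₂) : l₁.countP p ≤ l₂.countP q := by
  induction h with
  | nil => rfl
  | @cons a b _ _ hab _ ih =>
    simp only [List.countP_cons]
    split_ifs with hp hq
    · omega
    · exact absurd (hpq a b hab hp) hq
    all_goals omega

theorem Finset.sort_insert_of_forall_lt {α : Type*} [LinearOrder α] {s : Finset α} {a : α}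
    (h : ∀ b ∈ s, b < a) : (insert a s).sort = s.sort ++ [a] := by
  have hnodup : (s.sort ++ [a]).Nodup :=
    List.nodup_append.2 ⟨s.sort_nodup _, List.nodup_singleton a,
      fun b hb c hc => by rw [List.mem_singleton.1 hc]; exact (h b ((mem_sort _).1 hb)).ne⟩
  have hsorted : (s.sort ++ [a]).Pairwise (· ≤ ·) :=
    List.pairwise_append.2 ⟨s.pairwise_sort _, List.pairwise_singleton _ a,
      fun b hb c hc => by rw [List.mem_singleton.1 hc]; exact (h b ((mem_sort _).1 hb)).le⟩
  have htoFinset : (s.sort ++ [a]).toFinset = insert a s := by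
    ext x; simp
  rw [← htoFinset]
  exact (List.toFinset_sort _ hnodup).2 hsorted

section countGe

variable {α : Type*} [LinearOrder α]

def countGe (S : Finset α) (t : α) : ℕ := #{x ∈ S | t ≤ x}

theorem countGe_eq_countP_sort (S : Finset α) (t : α) :
    countGe S t = S.sort.countP (t ≤ ·) := by
  rw [countGe, ← Multiset.coe_countP, sort_eq, Multiset.countP_eq_card_filter]
  rfl

theorem countGe_mono {S T : Finset α} (h : S ⊆ T) (t : α) : countGe S t ≤ countGe T t :=
  card_le_card (filter_subset_filter _ h)

theorem countGe_insert_of_le {S : Finset α} {a t : α} (ha : a ∉ S) (hta : t ≤ a) :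
    countGe (insert a S) t = countGe S t + 1 := by
  rw [countGe, filter_insert, if_pos hta, card_insert_of_notMem (fun h => ha (mem_filter.1 h).1)]
  rfl

theorem countGe_eq_zero_of_forall_lt {S : Finset α} {t : α} (h : ∀ x ∈ S, x < t) :
    countGe S t = 0 :=
  card_eq_zero.2 (filter_eq_empty_iff.2 fun x hx => not_le.2 (h x hx))

theorem countGe_add_countGe_compl [Fintype α] (S : Finset α) (t : α) :
    countGe S t + countGe Sᶜ t = countGe univ t := by
  rw [countGe, countGe, countGe, ← card_union_of_disjoint
    (disjoint_filter_filter disjoint_compl_right), ← filter_union, union_compl]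

theorem countGe_le_of_forall₂_sort {S T : Finset α}
    (h : List.Forall₂ (· ≤ ·) S.sort T.sort) (t : α) : countGe S t ≤ countGe T t := by
  simp only [countGe_eq_countP_sort]
  exact h.countP_le_countP_s7 fun a b hab hta => by
    simpa using (of_decide_eq_true hta).trans hab

/-- The matching pairs the largest element of `S` with the largest element of `T`, and recurses. -/
theorem exists_subset_forall₂_sort_of_countGe_le (S : Finset α) :
    ∀ T : Finset α, (∀ t, countGe S t ≤ countGe T t) →
      ∃ T' ⊆ T, #T' = #S ∧ List.Forall₂ (· ≤ ·) S.sort T'.sort := by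
  induction S using Finset.induction_on_max with
  | empty => exact fun T _ => ⟨∅, empty_subset T, rfl, by simp⟩
  | insert a S hlt ih =>
    intro T hST
    have haS : a ∉ S := fun h => lt_irrefl a (hlt a h)
    obtain ⟨b, hb⟩ : {x ∈ T | a ≤ x}.Nonempty := by
      rw [← card_pos]
      have := hST a
      rw [countGe_insert_of_le haS le_rfl] at this
      exact Nat.lt_of_lt_of_le (Nat.succ_pos _) this
    obtain ⟨hbT, hab⟩ := mem_filter.1 hb
    set u := T.max' ⟨b, hbT⟩
    have huT : u ∈ T := T.max'_mem _
    have hau : a ≤ u := hab.trans (T.le_max' b hbT)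
    have hcount : ∀ t, countGe S t ≤ countGe (T.erase u) t := by
      intro t
      by_cases hta : t ≤ a
      · have hS := countGe_insert_of_le haS hta
        have hT := countGe_insert_of_le (T.notMem_erase u) (hta.trans hau)
        rw [insert_erase huT] at hT
        have := hST t
        omega
      · rw [countGe_eq_zero_of_forall_lt fun x hx => (hlt x hx).trans (not_le.1 hta)]
        exact Nat.zero_le _
    obtain ⟨T₀, hT₀, hcard, hsort⟩ := ih (T.erase u) hcount
    have hT₀u : ∀ x ∈ T₀, x < u := fun x hx => T.lt_max'_of_mem_erase_max' _ (hT₀ hx)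
    refine ⟨insert u T₀, insert_subset huT (hT₀.trans (erase_subset u T)), ?_, ?_⟩
    · rw [card_insert_of_notMem (fun h => lt_irrefl u (hT₀u u h)), card_insert_of_notMem haS,
        hcard]
    · rw [sort_insert_of_forall_lt hlt, sort_insert_of_forall_lt hT₀u]
      exact List.rel_append hsort (.cons hau .nil)

end countGe

theorem preceq_iff_countGe_le {m : ℕ} {S T : Finset (Fin m)} :
    preceq S T ↔ ∀ t, countGe S t ≤ countGe T t :=
  ⟨fun ⟨_, hT', _, h⟩ t => (countGe_le_of_forall₂_sort h t).trans (countGe_mono hT' t),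
    exists_subset_forall₂_sort_of_countGe_le S T⟩

theorem preceq.compl {m : ℕ} {S T : Finset (Fin m)} (h : preceq S T) : preceq Tᶜ Sᶜ := by
  rw [preceq_iff_countGe_le] at h ⊢
  intro t
  have := h t
  have := countGe_add_countGe_compl S t
  have := countGe_add_countGe_compl T t
  omega

theorem Finset.mem_image_compl {α : Type*} [DecidableEq α] [BooleanAlgebra α]
    {I : Finset α} {f : α} : f ∈ I.image compl ↔ fᶜ ∈ I := by
  simp only [mem_image, compl_eq_comm, exists_eq_right']

/-- if `I` is decreasing then `M_m \ Ǐ` is decreasing, where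
`Ǐ` is the set of multiplicative complements of elements of `I`. -/
theorem compl_decreasing {m : ℕ} (I : Finset (Finset (Fin m)))
    (hI : Decreasing I) :
    Decreasing (Finset.univ \ I.image (fun f => fᶜ)) := by
  intro f hf g hgf
  rw [mem_sdiff, mem_image_compl] at hf ⊢
  exact ⟨mem_univ g, fun hg => hf.2 (hI gᶜ hg fᶜ hgf.compl)⟩
end

section
/- Let C(I) be a decreasing monomial code in m variables. Then its dual code equals the monomial code C(M_m \ Ǐ), where Ǐ is the set of multiplicative complements of elements of I. -/
/-- Evaluation vector of a square-free monomial. -/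
def evalMon {m : ℕ} (S : Finset (Fin m)) : (Fin m → ZMod 2) → ZMod 2 :=
  fun u => ∏ i ∈ S, u i

/-- The monomial code `C(I)`. -/
def monomialCode {m : ℕ} (I : Finset (Finset (Fin m))) :
    Submodule (ZMod 2) ((Fin m → ZMod 2) → ZMod 2) :=
  Submodule.span (ZMod 2) (evalMon '' (I : Set (Finset (Fin m))))

section Aux

variable {m : ℕ}

lemma preceq_of_subset {g f : Finset (Fin m)} (h : g ⊆ f) : preceq g f :=
  ⟨g, h, rfl, by rw [List.forall₂_same]; intro x _; exact le_rfl⟩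

lemma evalMon_mul (S T : Finset (Fin m)) (u : Fin m → ZMod 2) :
    evalMon S u * evalMon T u = evalMon (S ∪ T) u := by
  have hx : ∀ x : ZMod 2, x * x = x := by decide
  unfold evalMon
  rw [← Finset.prod_union_inter (s₁ := S) (s₂ := T),
    ← Finset.prod_sdiff (Finset.inter_subset_union (s := S) (t := T))]
  rw [mul_assoc, hx]

lemma sum_eval (R : Finset (Fin m)) :
    ∑ u : Fin m → ZMod 2, evalMon R u = if R = Finset.univ then 1 else 0 := by
  have h1 : ∀ u : Fin m → ZMod 2, evalMon R u = ∏ i, (if i ∈ R then u i else 1) := by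
    intro u
    rw [Finset.prod_ite_mem, Finset.univ_inter]
    rfl
  simp_rw [h1]
  have hswap := Fintype.prod_sum (fun (i : Fin m) (x : ZMod 2) => if i ∈ R then x else 1)
  rw [← hswap]
  have h2 : ∀ i : Fin m, (∑ x : ZMod 2, if i ∈ R then x else 1)
      = if i ∈ R then 1 else 0 := by
    intro i
    by_cases h : i ∈ R
    · simp only [if_pos h]; decide
    · simp only [if_neg h]; decide
  simp_rw [h2]
  by_cases h : R = Finset.univ
  · simp [h]
  · rw [if_neg h]
    obtain ⟨i, hi⟩ : ∃ i, i ∉ R := by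
      by_contra hc; push_neg at hc; exact h (Finset.eq_univ_iff_forall.mpr hc)
    exact Finset.prod_eq_zero (Finset.mem_univ i) (by simp [hi])

lemma pairing (S T : Finset (Fin m)) :
    ∑ u : Fin m → ZMod 2, evalMon S u * evalMon T u = if Sᶜ ⊆ T then 1 else 0 := by
  simp_rw [evalMon_mul, sum_eval]
  congr 1
  have : (S ∪ T = Finset.univ) ↔ (Sᶜ ⊆ T) := by
    constructor
    · intro h i hi
      have : i ∈ S ∪ T := h ▸ Finset.mem_univ i
      rcases Finset.mem_union.mp this with h' | h'
      · exact absurd h' (Finset.mem_compl.mp hi)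
      · exact h'
    · intro h
      apply Finset.eq_univ_iff_forall.mpr
      intro i
      by_cases hiS : i ∈ S
      · exact Finset.mem_union_left _ hiS
      · exact Finset.mem_union_right _ (h (Finset.mem_compl.mpr hiS))
  simp [this]

lemma span_evalMon_top :
    Submodule.span (ZMod 2) (Set.range (evalMon (m := m))) = ⊤ := by
  rw [eq_top_iff]
  intro v _
  have h1 : ∀ w : Fin m → ZMod 2,
      (Pi.single w (1 : ZMod 2) : (Fin m → ZMod 2) → ZMod 2)
        ∈ Submodule.span (ZMod 2) (Set.range (evalMon (m := m))) := by
    intro w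
    have hexp : (Pi.single w (1 : ZMod 2) : (Fin m → ZMod 2) → ZMod 2)
        = ∑ S : Finset (Fin m), (∏ i ∈ Sᶜ, (w i + 1)) • evalMon S := by
      funext u
      rw [Finset.sum_apply]
      have key : ∏ i, (u i + (w i + 1)) = (Pi.single w (1 : ZMod 2) : (Fin m → ZMod 2) → ZMod 2) u := by
        rcases eq_or_ne u w with h | h
        · subst h
          rw [Pi.single_eq_same]
          apply Finset.prod_eq_one
          intro i _
          have : ∀ a : ZMod 2, a + (a + 1) = 1 := by decide
          exact this (u i)
        · rw [Pi.single_eq_of_ne h]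
          obtain ⟨i, hi⟩ := Function.ne_iff.mp h
          apply Finset.prod_eq_zero (Finset.mem_univ i)
          have : ∀ a b : ZMod 2, a ≠ b → a + (b + 1) = 0 := by decide
          exact this _ _ hi
      rw [← key, Fintype.prod_add]
      apply Finset.sum_congr rfl
      intro S _
      simp [evalMon, mul_comm]
    rw [hexp]
    apply Submodule.sum_mem
    intro S _
    exact Submodule.smul_mem _ _ (Submodule.subset_span ⟨S, rfl⟩)
  have h2 : ∑ w : Fin m → ZMod 2, v w • (Pi.single w (1 : ZMod 2) :
      (Fin m → ZMod 2) → ZMod 2) = v := by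
    have heq : (∑ w : Fin m → ZMod 2, v w • (Pi.single w (1 : ZMod 2) :
        (Fin m → ZMod 2) → ZMod 2)) = ∑ w : Fin m → ZMod 2, Pi.single w (v w) :=
      Finset.sum_congr rfl fun w _ => by rw [← Pi.single_smul, smul_eq_mul, mul_one]
    rw [heq, Finset.univ_sum_single]
  rw [← h2]
  exact Submodule.sum_mem _ fun w _ => Submodule.smul_mem _ _ (h1 w)

def pairMapR (S : Finset (Fin m)) :
    ((Fin m → ZMod 2) → ZMod 2) →ₗ[ZMod 2] ZMod 2 where
  toFun v := ∑ u, evalMon S u * v u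
  map_add' a b := by simp [mul_add, Finset.sum_add_distrib]
  map_smul' a c := by simp [Finset.mul_sum, smul_eq_mul, mul_left_comm]

end Aux

/-- the dual of a decreasing monomial code `C(I)` (with respect to
the standard bilinear form) is the monomial code `C(M_m \ Ǐ)`. -/
theorem dual_decreasing_monomialCode {m : ℕ} (I : Finset (Finset (Fin m)))
    (hI : Decreasing I) (v : (Fin m → ZMod 2) → ZMod 2) :
    (∀ c ∈ monomialCode I, ∑ u : Fin m → ZMod 2, c u * v u = 0) ↔
      v ∈ monomialCode (Finset.univ \ I.image (fun f => fᶜ)) := by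
  constructor
  · intro h
    have hvtop : v ∈ Submodule.span (ZMod 2) (Set.range (evalMon (m := m))) := by
      rw [span_evalMon_top]; trivial
    rw [Submodule.mem_span_range_iff_exists_fun] at hvtop
    obtain ⟨c, hc⟩ := hvtop
    have key : ∀ T : Finset (Fin m), c T ≠ 0 → Tᶜ ∉ I := by
      by_contra hk
      push_neg at hk
      obtain ⟨T, hcT, hTI⟩ := hk
      set J := Finset.univ.filter (fun T : Finset (Fin m) => c T ≠ 0 ∧ Tᶜ ∈ I) with hJdef
      have hJ : J.Nonempty := ⟨T, by simp [hJdef, hcT, hTI]⟩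
      obtain ⟨T₀, hT₀J, hmax⟩ := Finset.exists_max_image J Finset.card hJ
      obtain ⟨hcT₀, hT₀I⟩ := (Finset.mem_filter.mp hT₀J).2
      have h0 := h (evalMon T₀ᶜ)
        (Submodule.subset_span ⟨T₀ᶜ, Finset.mem_coe.mpr hT₀I, rfl⟩)
      rw [← hc] at h0
      have step : ∀ u : Fin m → ZMod 2,
          evalMon T₀ᶜ u * (∑ T : Finset (Fin m), c T • evalMon T) u
            = ∑ T : Finset (Fin m), c T * (evalMon T₀ᶜ u * evalMon T u) := by
        intro u
        simp only [Finset.sum_apply, Pi.smul_apply, smul_eq_mul, Finset.mul_sum]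
        exact Finset.sum_congr rfl fun T _ => by ring
      rw [show (∑ u : Fin m → ZMod 2, evalMon T₀ᶜ u *
            (∑ T : Finset (Fin m), c T • evalMon T) u)
          = ∑ T : Finset (Fin m), c T * (if T₀ᶜᶜ ⊆ T then 1 else 0) by
        simp_rw [step]
        rw [Finset.sum_comm]
        simp_rw [← Finset.mul_sum, pairing]] at h0
      rw [compl_compl] at h0
      rw [Finset.sum_eq_single T₀ ?_ ?_] at h0
      · rw [if_pos Finset.Subset.rfl, mul_one] at h0
        exact hcT₀ h0
      · intro b _ hb
        by_cases hsub : T₀ ⊆ b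
        · rw [if_pos hsub]
          by_contra hne
          have hcb : c b ≠ 0 := fun h' => hne (by rw [h', zero_mul])
          have hbI : bᶜ ∈ I := by
            apply hI T₀ᶜ hT₀I
            exact preceq_of_subset (Finset.compl_subset_compl.mpr hsub)
          have hbJ : b ∈ J := Finset.mem_filter.mpr ⟨Finset.mem_univ _, hcb, hbI⟩
          exact hb (Finset.eq_of_subset_of_card_le hsub (hmax b hbJ)).symm
        · rw [if_neg hsub, mul_zero]
      · intro habs
        exact absurd (Finset.mem_univ T₀) habs
    rw [← hc]
    apply Submodule.sum_mem
    intro T _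
    by_cases hcT : c T = 0
    · simp [hcT]
    · apply Submodule.smul_mem
      apply Submodule.subset_span
      refine ⟨T, ?_, rfl⟩
      rw [Finset.mem_coe, Finset.mem_sdiff]
      refine ⟨Finset.mem_univ _, fun hmem => ?_⟩
      obtain ⟨f, hf, hfc⟩ := Finset.mem_image.mp hmem
      exact key T hcT (by rw [← hfc, compl_compl]; exact hf)
  · intro hv c hcI
    -- It suffices to show ⟨evalMon S, v⟩ = 0 for each generator S ∈ I.
    have hgen : ∀ S ∈ I, ∑ u : Fin m → ZMod 2, evalMon S u * v u = 0 := by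
      intro S hS
      have hker : monomialCode (Finset.univ \ I.image (fun f => fᶜ))
          ≤ LinearMap.ker (pairMapR (m := m) S) := by
        rw [monomialCode, Submodule.span_le]
        rintro _ ⟨T, hT, rfl⟩
        rw [SetLike.mem_coe, LinearMap.mem_ker]
        show ∑ u : Fin m → ZMod 2, evalMon S u * evalMon T u = 0
        rw [pairing, if_neg]
        intro hsub
        have hTc : Tᶜ ⊆ S := by
          intro i hi
          by_contra hiS
          exact (Finset.mem_compl.mp hi) (hsub (Finset.mem_compl.mpr hiS))
        have hTcI : Tᶜ ∈ I := hI S hS Tᶜ (preceq_of_subset hTc)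
        have hT' := Finset.mem_sdiff.mp (Finset.mem_coe.mp hT)
        exact hT'.2 (Finset.mem_image.mpr ⟨Tᶜ, hTcI, compl_compl T⟩)
      exact LinearMap.mem_ker.mp (hker hv)
    -- Now extend by linearity in c.
    have hker2 : monomialCode I ≤ LinearMap.ker
        ({ toFun := fun c => ∑ u : Fin m → ZMod 2, c u * v u,
           map_add' := fun a b => by simp [add_mul, Finset.sum_add_distrib],
           map_smul' := fun a c => by
             simp [Finset.mul_sum, smul_eq_mul, mul_assoc] } :
          ((Fin m → ZMod 2) → ZMod 2) →ₗ[ZMod 2] ZMod 2) := by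
      rw [monomialCode, Submodule.span_le]
      rintro _ ⟨S, hS, rfl⟩
      rw [SetLike.mem_coe, LinearMap.mem_ker]
      exact hgen S (Finset.mem_coe.mp hS)
    exact LinearMap.mem_ker.mp (hker2 hcI)
end

section
/- Let C(I) be a decreasing monomial code in m variables with |I| ≤ 2^{m-1}. Then C(I) ⊆ C(I)^⊥ if and only if for every f ∈ I, the multiplicative complement f̌ is not in I. -/
lemma subset_preceq {m : ℕ} {S T : Finset (Fin m)} (h : S ⊆ T) : preceq S T :=
  ⟨S, h, rfl, List.forall₂_same.mpr (fun x _ => le_refl x)⟩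

lemma zmod2_idem : ∀ a : ZMod 2, a * a = a := by decide
lemma zmod2_add_self : ∀ a : ZMod 2, a + a = 0 := by decide
lemma zmod2_ne_one : ∀ a : ZMod 2, a ≠ 1 → a = 0 := by decide
lemma zmod2_add_one_one : ∀ a : ZMod 2, a + 1 + 1 = a := by decide
lemma zmod2_add_one_ne : ∀ a : ZMod 2, a + 1 ≠ a := by decide

lemma prod_mul_prod_union {m : ℕ} (f g : Finset (Fin m)) (u : Fin m → ZMod 2) :
    (∏ i ∈ f, u i) * (∏ i ∈ g, u i) = ∏ i ∈ f ∪ g, u i := by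
  classical
  set a := ∏ i ∈ f \ (g ∩ f), u i with ha
  set b := ∏ i ∈ g ∩ f, u i with hb
  set c := ∏ i ∈ g \ f, u i with hc
  have h1 : ∏ i ∈ f, u i = a * b := (Finset.prod_sdiff Finset.inter_subset_right).symm
  have h2 : ∏ i ∈ g, u i = b * c := by
    rw [hb, ← Finset.sdiff_sdiff_self_left g f]
    exact (Finset.prod_sdiff (Finset.sdiff_subset)).symm
  have h3 : ∏ i ∈ f ∪ g, u i = a * b * c := by
    rw [show f ∪ g = f ∪ (g \ f) from (Finset.union_sdiff_self_eq_union).symm,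
      Finset.prod_union Finset.disjoint_sdiff, h1]
  rw [h1, h2, h3, show a * b * (b * c) = a * (b * b) * c by ring, zmod2_idem]

lemma sum_prod_eq {m : ℕ} (A : Finset (Fin m)) :
    ∑ u : Fin m → ZMod 2, ∏ i ∈ A, u i =
      if A = Finset.univ then 1 else 0 := by
  classical
  split_ifs with h
  · subst h
    rw [Finset.sum_eq_single (fun _ => (1 : ZMod 2))]
    · simp
    · intro u _ hu
      have : ∃ j, u j ≠ 1 := by
        by_contra hc
        push_neg at hc
        exact hu (funext hc)
      obtain ⟨j, hj⟩ := this
      exact Finset.prod_eq_zero (Finset.mem_univ j) (zmod2_ne_one _ hj)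
    · simp
  · obtain ⟨j, hj⟩ : ∃ j, j ∉ A := by
      by_contra hc
      push_neg at hc
      exact h (Finset.eq_univ_iff_forall.mpr hc)
    apply Finset.sum_ninvolution (g := fun u => Function.update u j (u j + 1))
    · intro u
      have he : ∏ i ∈ A, Function.update u j (u j + 1) i = ∏ i ∈ A, u i :=
        Finset.prod_congr rfl fun i hi =>
          Function.update_of_ne (by rintro rfl; exact hj hi) _ _
      rw [he]; exact zmod2_add_self _
    · intro u _ hc
      have := congrFun hc j
      simp only [Function.update_self] at this
      exact zmod2_add_one_ne _ this
    · intro u; exact Finset.mem_univ _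
    · intro u
      funext i
      by_cases hij : i = j
      · subst hij; simp [Function.update_self, zmod2_add_one_one]
      · simp [Function.update_of_ne hij]

lemma pairing_eq {m : ℕ} (f g : Finset (Fin m)) :
    ∑ u : Fin m → ZMod 2, evalMon f u * evalMon g u =
      if f ∪ g = Finset.univ then 1 else 0 := by
  rw [← sum_prod_eq (f ∪ g)]
  exact Finset.sum_congr rfl fun u _ => prod_mul_prod_union f g u

/-- a decreasing monomial code `C(I)` with `|I| ≤ 2^{m-1}` is
weakly self-dual (`C(I) ⊆ C(I)^⊥`) iff for every `f ∈ I` the multiplicative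
complement `f̌` is not in `I`. -/
theorem weakly_selfDual_iff {m : ℕ} (I : Finset (Finset (Fin m)))
    (hI : Decreasing I) (hcard : I.card ≤ 2 ^ (m - 1)) :
    (∀ c ∈ monomialCode I, ∀ c' ∈ monomialCode I,
        ∑ u : Fin m → ZMod 2, c u * c' u = 0) ↔
      ∀ f ∈ I, fᶜ ∉ I := by
  constructor
  · intro h f hf hfc
    have h1 : evalMon f ∈ monomialCode I :=
      Submodule.subset_span ⟨f, by simpa using hf, rfl⟩
    have h2 : evalMon fᶜ ∈ monomialCode I :=
      Submodule.subset_span ⟨fᶜ, by simpa using hfc, rfl⟩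
    have := h _ h1 _ h2
    rw [pairing_eq, if_pos (Finset.union_compl f)] at this
    exact one_ne_zero this
  · intro hcomp
    have key : ∀ f ∈ I, ∀ g ∈ I, (f : Finset (Fin m)) ∪ g ≠ Finset.univ := by
      intro f hf g hg hc
      have hsub : gᶜ ⊆ f := by
        intro i hi
        simp only [Finset.mem_compl] at hi
        rcases Finset.mem_union.mp (hc ▸ Finset.mem_univ i) with h' | h'
        · exact h'
        · exact absurd h' hi
      exact hcomp g hg (hI f hf _ (subset_preceq hsub))
    intro c hc c' hc'
    induction hc, hc' using Submodule.span_induction₂ with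
    | mem_mem x y hx hy =>
      obtain ⟨f, hf, rfl⟩ := hx
      obtain ⟨g, hg, rfl⟩ := hy
      rw [pairing_eq, if_neg (key f (by simpa using hf) g (by simpa using hg))]
    | zero_left y hy => simp
    | zero_right x hx => simp
    | add_left x y z hx hy hz h1 h2 =>
      simp only [Pi.add_apply, add_mul, Finset.sum_add_distrib, h1, h2, add_zero]
    | add_right x y z hx hy hz h1 h2 =>
      simp only [Pi.add_apply, mul_add, Finset.sum_add_distrib, h1, h2, add_zero]
    | smul_left r x y hx hy h1 =>
      simp only [Pi.smul_apply, smul_eq_mul, mul_assoc, ← Finset.mul_sum, h1, mul_zero]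
    | smul_right r x y hx hy h1 =>
      simp only [Pi.smul_apply, smul_eq_mul, mul_left_comm, ← Finset.mul_sum, h1, mul_zero]
end

section
/- The permutation group of a decreasing monomial code C(I) in m variables contains a subgroup isomorphic to the lower triangular affine group LTA(m,2); that is, for every (A,b) ∈ LTA(m,2), permuting the coordinates of C(I) (indexed by F_2^m) by u ↦ Au + b maps C(I) to itself. -/
/-- `A` is lower unitriangular. -/
def LowerUni {m : ℕ} (A : Matrix (Fin m) (Fin m) (ZMod 2)) : Prop :=
  (∀ i, A i i = 1) ∧ (∀ i j : Fin m, i < j → A i j = 0)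

/-! ### Auxiliary lemmas -/

/-- An "injection" version of `preceq`: there is an injection of `T` into `S` that
is inflationary. -/
def injPrec {m : ℕ} (T S : Finset (Fin m)) : Prop :=
  ∃ φ : Fin m → Fin m, Set.InjOn φ T ∧ (∀ t ∈ T, φ t ∈ S) ∧ ∀ t ∈ T, t ≤ φ t

lemma sort_le_of_inj {m n : ℕ} {T T' : Finset (Fin m)} (hT : T.card = n) (hT' : T'.card = n)
    {φ : Fin m → Fin m} (hinj : Set.InjOn φ T) (hmem : ∀ t ∈ T, φ t ∈ T')
    (hle : ∀ t ∈ T, t ≤ φ t) (k : Fin n) :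
    T.orderEmbOfFin hT k ≤ T'.orderEmbOfFin hT' k := by
  by_contra hcon
  push_neg at hcon
  set a := T.orderEmbOfFin hT k with ha
  have h1 : (Finset.Ici k).card ≤ (T.filter (fun x => a ≤ x)).card := by
    have hsub : (Finset.Ici k).image (T.orderEmbOfFin hT) ⊆ T.filter (fun x => a ≤ x) := by
      intro x hx
      simp only [Finset.mem_image, Finset.mem_Ici] at hx
      obtain ⟨j, hj, rfl⟩ := hx
      exact Finset.mem_filter.2 ⟨Finset.orderEmbOfFin_mem T hT j,
        (T.orderEmbOfFin hT).monotone hj⟩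
    calc (Finset.Ici k).card = ((Finset.Ici k).image (T.orderEmbOfFin hT)).card := by
          rw [Finset.card_image_of_injective _ (T.orderEmbOfFin hT).injective]
      _ ≤ _ := Finset.card_le_card hsub
  have h2 : (T'.filter (fun x => a ≤ x)).card ≤ (Finset.Ioi k).card := by
    have hsub : T'.filter (fun x => a ≤ x) ⊆ (Finset.Ioi k).image (T'.orderEmbOfFin hT') := by
      intro x hx
      obtain ⟨hx1, hx2⟩ := Finset.mem_filter.1 hx
      have : x ∈ Set.range (T'.orderEmbOfFin hT') := by
        rw [Finset.range_orderEmbOfFin]; exact hx1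
      obtain ⟨j, rfl⟩ := this
      have : k < j := by
        by_contra hkj
        push_neg at hkj
        exact absurd (le_trans hx2 ((T'.orderEmbOfFin hT').monotone hkj)) (not_le.2 hcon)
      exact Finset.mem_image.2 ⟨j, Finset.mem_Ioi.2 this, rfl⟩
    calc (T'.filter (fun x => a ≤ x)).card ≤ _ := Finset.card_le_card hsub
      _ ≤ (Finset.Ioi k).card := Finset.card_image_le
  have h3 : (T.filter (fun x => a ≤ x)).card ≤ (T'.filter (fun x => a ≤ x)).card := by
    apply Finset.card_le_card_of_injOn φ
    · intro t ht
      obtain ⟨ht1, ht2⟩ := Finset.mem_filter.1 ht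
      exact Finset.mem_filter.2 ⟨hmem t ht1, le_trans ht2 (hle t ht1)⟩
    · exact hinj.mono (fun x hx => (Finset.mem_filter.1 hx).1)
  rw [Fin.card_Ici] at h1
  rw [Fin.card_Ioi] at h2
  have hk := k.isLt
  omega

lemma injPrec.to_preceq {m : ℕ} {T S : Finset (Fin m)} (h : injPrec T S) : preceq T S := by
  obtain ⟨φ, hinj, hmem, hle⟩ := h
  have hc : (T.image φ).card = T.card := Finset.card_image_of_injOn hinj
  refine ⟨T.image φ, ?_, hc, ?_⟩
  · intro x hx
    obtain ⟨t, ht, rfl⟩ := Finset.mem_image.1 hx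
    exact hmem t ht
  · rw [List.forall₂_iff_get]
    constructor
    · simp [Finset.length_sort, hc]
    · intro i h₁ h₂
      have hi : i < T.card := by simpa [Finset.length_sort] using h₁
      have hmem' : ∀ t ∈ T, φ t ∈ T.image φ := fun t ht => Finset.mem_image_of_mem φ ht
      have := sort_le_of_inj (rfl : T.card = T.card) hc hinj hmem' hle ⟨i, hi⟩
      rw [Finset.orderEmbOfFin_apply, Finset.orderEmbOfFin_apply] at this
      simpa [List.get_eq_getElem] using this

lemma injPrec_mono {m : ℕ} {T S S' : Finset (Fin m)} (h : injPrec T S) (hS : S ⊆ S') :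
    injPrec T S' := by
  obtain ⟨φ, hinj, hmem, hle⟩ := h
  exact ⟨φ, hinj, fun t ht => hS (hmem t ht), hle⟩

lemma injPrec_insert {m : ℕ} {T S : Finset (Fin m)} {i j : Fin m} (h : injPrec T S)
    (hji : j ≤ i) (hiS : i ∉ S) : injPrec (insert j T) (insert i S) := by
  obtain ⟨φ, hinj, hmem, hle⟩ := h
  by_cases hjT : j ∈ T
  · rw [Finset.insert_eq_self.2 hjT]
    exact injPrec_mono ⟨φ, hinj, hmem, hle⟩ (Finset.subset_insert _ _)
  · refine ⟨Function.update φ j i, ?_, ?_, ?_⟩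
    · intro x hx y hy hxy
      simp only [Finset.coe_insert, Set.mem_insert_iff] at hx hy
      rcases hx with rfl | hx <;> rcases hy with rfl | hy
      · rfl
      · have hne : y ≠ x := fun h => hjT (h ▸ hy)
        rw [Function.update_self, Function.update_of_ne hne _ _] at hxy
        exact absurd (hxy ▸ hmem y hy) hiS
      · have hne : x ≠ y := fun h => hjT (h ▸ hx)
        rw [Function.update_self, Function.update_of_ne hne _ _] at hxy
        exact absurd (hxy ▸ hmem x hx) hiS
      · have hnex : x ≠ j := fun h => hjT (h ▸ hx)
        have hney : y ≠ j := fun h => hjT (h ▸ hy)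
        rw [Function.update_of_ne hnex _ _, Function.update_of_ne hney _ _] at hxy
        exact hinj hx hy hxy
    · intro t ht
      rcases Finset.mem_insert.1 ht with rfl | ht
      · rw [Function.update_self]; exact Finset.mem_insert_self _ _
      · have hne : t ≠ j := fun h => hjT (h ▸ ht)
        rw [Function.update_of_ne hne _ _]
        exact Finset.mem_insert_of_mem (hmem t ht)
    · intro t ht
      rcases Finset.mem_insert.1 ht with rfl | ht
      · rw [Function.update_self]; exact hji
      · have hne : t ≠ j := fun h => hjT (h ▸ ht)
        rw [Function.update_of_ne hne _ _]
        exact hle t ht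

/-- Multiplication by the coordinate function `u ↦ u j`, as a linear map. -/
def mulCoord {m : ℕ} (j : Fin m) :
    ((Fin m → ZMod 2) → ZMod 2) →ₗ[ZMod 2] ((Fin m → ZMod 2) → ZMod 2) where
  toFun c := fun u => u j * c u
  map_add' c d := by funext u; simp [mul_add]
  map_smul' r c := by funext u; simp [mul_comm, mul_assoc, mul_left_comm]

lemma zmod2_mul_self (x : ZMod 2) : x * x = x := by revert x; decide

lemma mulCoord_evalMon {m : ℕ} (j : Fin m) (T : Finset (Fin m)) :
    mulCoord j (evalMon T) = evalMon (insert j T) := by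
  funext u
  by_cases hj : j ∈ T
  · rw [Finset.insert_eq_self.2 hj]
    show u j * evalMon T u = evalMon T u
    unfold evalMon
    rw [← Finset.mul_prod_erase T _ hj, ← mul_assoc, zmod2_mul_self]
  · show u j * evalMon T u = evalMon (insert j T) u
    unfold evalMon
    rw [Finset.prod_insert hj]

lemma main_lemma {m : ℕ} (A : Matrix (Fin m) (Fin m) (ZMod 2)) (b : Fin m → ZMod 2)
    (hA : LowerUni A) (S : Finset (Fin m)) :
    (fun u => evalMon S (A.mulVec u + b)) ∈
      Submodule.span (ZMod 2) (evalMon '' {T | injPrec T S}) := by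
  induction S using Finset.induction_on with
  | empty =>
    have : (fun u => evalMon (∅ : Finset (Fin m)) (A.mulVec u + b)) =
        evalMon (∅ : Finset (Fin m)) := by
      funext u; simp [evalMon]
    rw [this]
    exact Submodule.subset_span ⟨∅, ⟨id, by simp [Set.InjOn], by simp, by simp⟩, rfl⟩
  | @insert i S hiS IH =>
    set gfun : (Fin m → ZMod 2) → ZMod 2 := fun u => evalMon S (A.mulVec u + b) with hg
    have hdecomp : (fun u => evalMon (insert i S) (A.mulVec u + b)) =
        (∑ j : Fin m, A i j • mulCoord j gfun) + b i • gfun := by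
      funext u
      have h0 : evalMon (insert i S) (A.mulVec u + b) = ((∑ j, A i j * u j) + b i) * gfun u := by
        rw [evalMon, Finset.prod_insert hiS]; rfl
      show evalMon (insert i S) (A.mulVec u + b) =
        (∑ j : Fin m, A i j • mulCoord j gfun) u + (b i • gfun) u
      rw [h0]
      simp only [Finset.sum_apply, Pi.smul_apply, Pi.add_apply, smul_eq_mul, mulCoord,
        LinearMap.coe_mk, AddHom.coe_mk]
      rw [add_mul, Finset.sum_mul]
      congr 1
      exact Finset.sum_congr rfl fun j _ => by ring
    rw [hdecomp]
    have hsub : Submodule.span (ZMod 2) (evalMon '' {T | injPrec T S}) ≤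
        Submodule.span (ZMod 2) (evalMon '' {T | injPrec T (insert i S)}) := by
      apply Submodule.span_mono
      apply Set.image_mono
      intro T hT
      exact injPrec_mono hT (Finset.subset_insert _ _)
    refine Submodule.add_mem _ (Submodule.sum_mem _ ?_) (Submodule.smul_mem _ _ (hsub IH))
    intro j _
    by_cases hAij : A i j = 0
    · rw [hAij, zero_smul]; exact Submodule.zero_mem _
    · apply Submodule.smul_mem
      have hji : j ≤ i := by
        by_contra hlt
        exact hAij (hA.2 i j (not_le.1 hlt))
      have h1 : mulCoord j gfun ∈
          Submodule.map (mulCoord j) (Submodule.span (ZMod 2) (evalMon '' {T | injPrec T S})) :=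
        Submodule.mem_map_of_mem IH
      rw [Submodule.map_span] at h1
      refine Submodule.span_mono ?_ h1
      rintro x ⟨_, ⟨T, hT, rfl⟩, rfl⟩
      exact ⟨insert j T, injPrec_insert hT hji hiS, (mulCoord_evalMon j T).symm⟩

/-- the permutation group of a decreasing monomial code contains
`LTA(m,2)`: for any lower unitriangular affine map `u ↦ Au + b`, the induced
coordinate permutation maps `C(I)` into itself. -/
theorem lta_subset_permGroup {m : ℕ} (I : Finset (Finset (Fin m)))
    (hI : Decreasing I) (A : Matrix (Fin m) (Fin m) (ZMod 2))
    (b : Fin m → ZMod 2) (hA : LowerUni A) :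
    ∀ c ∈ monomialCode I, (fun u => c (A.mulVec u + b)) ∈ monomialCode I := by
  intro c hc
  induction hc using Submodule.span_induction with
  | mem x hx =>
    obtain ⟨S, hS, rfl⟩ := hx
    have := main_lemma A b hA S
    refine Submodule.span_le.2 ?_ this
    rintro y ⟨T, hT, rfl⟩
    exact Submodule.subset_span ⟨T, hI S hS T (injPrec.to_preceq hT), rfl⟩
  | zero =>
    have : (fun u => (0 : (Fin m → ZMod 2) → ZMod 2) (A.mulVec u + b)) =
        (0 : (Fin m → ZMod 2) → ZMod 2) := rfl
    rw [this]; exact Submodule.zero_mem _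
  | add x y _ _ hx hy =>
    have : (fun u => (x + y) (A.mulVec u + b)) =
        (fun u => x (A.mulVec u + b)) + (fun u => y (A.mulVec u + b)) := rfl
    rw [this]; exact Submodule.add_mem _ hx hy
  | smul r x _ hx =>
    have : (fun u => (r • x) (A.mulVec u + b)) =
        r • (fun u => x (A.mulVec u + b)) := rfl
    rw [this]; exact Submodule.smul_mem _ _ hx
end

section
/- Substituting x_i ↦ x_i + Σ_{j<i} a_{ij} x_j + b_i (a lower triangular affine change of variables) into a square-free monomial f ∈ M_m yields, in the ring R_m, a linear combination of monomials g with g ⪯ f; in particular, if I is a decreasing set containing f, the result lies in the span of {g : g ∈ I}. -/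
open MvPolynomial

/-- The ring `R_m = F_2[x_0,…,x_{m-1}]/(x_i^2 - x_i)`. -/
def Rring (m : ℕ) : Type :=
  MvPolynomial (Fin m) (ZMod 2) ⧸
    Ideal.span { P : MvPolynomial (Fin m) (ZMod 2) | ∃ i, P = X i ^ 2 - X i }

noncomputable instance (m : ℕ) : CommRing (Rring m) := Ideal.Quotient.commRing _
noncomputable instance (m : ℕ) : Algebra (ZMod 2) (Rring m) := Ideal.Quotient.algebra _

/-- The class in `R_m` of a polynomial. -/
noncomputable def rmk {m : ℕ} (P : MvPolynomial (Fin m) (ZMod 2)) : Rring m :=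
  Ideal.Quotient.mk _ P

/-- The lower triangular affine substitution
`x_i ↦ x_i + ∑_{j<i} a_{ij} x_j + b_i` applied to a polynomial. -/
noncomputable def ltaSubst {m : ℕ} (a : Fin m → Fin m → ZMod 2)
    (b : Fin m → ZMod 2) (P : MvPolynomial (Fin m) (ZMod 2)) :
    MvPolynomial (Fin m) (ZMod 2) :=
  aeval (fun i : Fin m =>
    X i + (∑ j ∈ Finset.univ.filter (fun j : Fin m => j < i), C (a i j) * X j)
      + C (b i)) P

/-!
Induct on `f`, adding its largest variable `x_i` last. The substituted `x_i` is a combination of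
`1` and of the `x_j` with `j ≤ i`, and in `R_m` multiplying a monomial `x^g` by `x_j` gives the
monomial of `insert j g` (as `x_j² = x_j`). So it suffices that `g ⪯ s` and `j ≤ i` imply
`insert j g ⪯ insert i s` when `i` exceeds every element of `s`: on sorted lists, inserting `j`
into the list of `g` is dominated pointwise by appending `i` to the list of the subset of `s`.
-/

namespace List

variable {α : Type*}

theorem orderedInsert_eq_append_singleton (r : α → α → Prop) [DecidableRel r] {a : α} :
    ∀ {l : List α}, (∀ x ∈ l, ¬ r a x) → l.orderedInsert r a = l ++ [a]
  | [], _ => rfl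
  | b :: _, h => by
    rw [orderedInsert_of_not_le _ _ (h b mem_cons_self),
      orderedInsert_eq_append_singleton r fun x hx => h x (mem_cons_of_mem _ hx), cons_append]

theorem Forall₂.le_trans [Preorder α] {l₁ l₂ l₃ : List α} (h₁₂ : Forall₂ (· ≤ ·) l₁ l₂)
    (h₂₃ : Forall₂ (· ≤ ·) l₂ l₃) : Forall₂ (· ≤ ·) l₁ l₃ := by
  induction h₁₂ generalizing l₃ with
  | nil => exact h₂₃
  | cons hab _ ih =>
    cases h₂₃ with
    | cons hbc h₂₃ => exact .cons (hab.trans hbc) (ih h₂₃)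

theorem forall₂_le_tail_append_singleton [Preorder α] {i : α} :
    ∀ {b : α} {l : List α}, Pairwise (· ≤ ·) (b :: l) → (∀ x ∈ b :: l, x ≤ i) →
      Forall₂ (· ≤ ·) (b :: l) (l ++ [i])
  | b, [], _, hi => .cons (hi b mem_cons_self) .nil
  | _, _ :: _, hs, hi =>
    .cons ((pairwise_cons.1 hs).1 _ mem_cons_self)
      (forall₂_le_tail_append_singleton (pairwise_cons.1 hs).2
        fun x hx => hi x (mem_cons_of_mem _ hx))

theorem forall₂_le_orderedInsert_append_singleton [LinearOrder α] {i j : α} (hji : j ≤ i)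
    {l₁ l₂ : List α} (h : Forall₂ (· ≤ ·) l₁ l₂) (hs : Pairwise (· ≤ ·) l₂)
    (hi : ∀ x ∈ l₂, x ≤ i) :
    Forall₂ (· ≤ ·) (l₁.orderedInsert (· ≤ ·) j) (l₂ ++ [i]) := by
  induction h with
  | nil => exact .cons hji .nil
  | @cons a b l₁ l₂ hab h ih =>
    by_cases hja : j ≤ a
    · rw [orderedInsert_cons_of_le _ _ hja]
      exact .cons (hja.trans hab)
        ((Forall₂.cons hab h).le_trans (forall₂_le_tail_append_singleton hs hi))
    · rw [orderedInsert_of_not_le _ _ hja]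
      exact .cons hab (ih (pairwise_cons.1 hs).2 fun x hx => hi x (mem_cons_of_mem _ hx))

end List

namespace Finset

variable {α : Type*} [LinearOrder α]

theorem sort_insert_eq_orderedInsert {s : Finset α} {a : α} (ha : a ∉ s) :
    (insert a s).sort (· ≤ ·) = (s.sort (· ≤ ·)).orderedInsert (· ≤ ·) a := by
  refine List.Perm.eq_of_pairwise' (pairwise_sort _ _) ((pairwise_sort _ _).orderedInsert _ _) ?_
  exact (sort_perm_toList _ _).trans <| (toList_insert ha).trans <|
    ((sort_perm_toList _ _).symm.cons a).trans (List.perm_orderedInsert _ _ _).symm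

theorem sort_insert_of_forall_lt_s14 {s : Finset α} {a : α} (h : ∀ x ∈ s, x < a) :
    (insert a s).sort (· ≤ ·) = s.sort (· ≤ ·) ++ [a] := by
  rw [sort_insert_eq_orderedInsert fun ha => lt_irrefl a (h a ha)]
  exact List.orderedInsert_eq_append_singleton _ fun x hx => not_le.2 (h x (mem_sort _ |>.1 hx))

end Finset

section Preceq

variable {m : ℕ}

theorem preceq_refl (s : Finset (Fin m)) : preceq s s :=
  ⟨s, subset_rfl, rfl, List.forall₂_refl _⟩

theorem preceq.trans_subset {g s t : Finset (Fin m)} (h : preceq g s) (hst : s ⊆ t) :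
    preceq g t :=
  let ⟨s', hs', hcard, hle⟩ := h
  ⟨s', hs'.trans hst, hcard, hle⟩

theorem preceq_insert_insert_of_forall_lt {g s : Finset (Fin m)} {i j : Fin m}
    (h : preceq g s) (hs : ∀ x ∈ s, x < i) (hji : j ≤ i) :
    preceq (insert j g) (insert i s) := by
  by_cases hjg : j ∈ g
  · rw [Finset.insert_eq_of_mem hjg]
    exact h.trans_subset (Finset.subset_insert _ _)
  obtain ⟨s', hs', hcard, hle⟩ := h
  have hs'i : ∀ x ∈ s', x < i := fun x hx => hs x (hs' hx)
  have his' : i ∉ s' := fun hi => lt_irrefl i (hs'i i hi)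
  refine ⟨insert i s', Finset.insert_subset_insert _ hs', ?_, ?_⟩
  · rw [Finset.card_insert_of_notMem his', Finset.card_insert_of_notMem hjg, hcard]
  · rw [Finset.sort_insert_of_forall_lt_s14 hs'i, Finset.sort_insert_eq_orderedInsert hjg]
    exact List.forall₂_le_orderedInsert_append_singleton hji hle (Finset.pairwise_sort _ _)
      fun x hx => (hs'i x ((Finset.mem_sort _).1 hx)).le

end Preceq

section Rring

variable {m : ℕ}

noncomputable def preceqSpan (f : Finset (Fin m)) : Submodule (ZMod 2) (Rring m) :=
  Submodule.span (ZMod 2) { Q : Rring m | ∃ g, preceq g f ∧ Q = rmk (∏ i ∈ g, X i) }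

theorem preceqSpan_mono {s t : Finset (Fin m)} (hst : s ⊆ t) : preceqSpan s ≤ preceqSpan t :=
  Submodule.span_mono fun _ ⟨g, hg, hQ⟩ => ⟨g, hg.trans_subset hst, hQ⟩

noncomputable def rmkAlgHom : MvPolynomial (Fin m) (ZMod 2) →ₐ[ZMod 2] Rring m :=
  Ideal.Quotient.mkₐ (ZMod 2) _

theorem rmk_mul_rmk (P Q : MvPolynomial (Fin m) (ZMod 2)) : rmk P * rmk Q = rmk (P * Q) :=
  rfl

theorem rmk_X_sq (j : Fin m) : rmk (X j ^ 2) = rmk (X j : MvPolynomial (Fin m) (ZMod 2)) :=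
  Ideal.Quotient.eq.2 (Ideal.subset_span ⟨j, rfl⟩)

theorem rmk_X_mul_prod_X (j : Fin m) (g : Finset (Fin m)) :
    rmk (X j) * rmk (∏ k ∈ g, X k) = rmk (∏ k ∈ insert j g, (X k : MvPolynomial _ (ZMod 2))) := by
  rw [rmk_mul_rmk]
  by_cases hjg : j ∈ g
  · rw [Finset.insert_eq_of_mem hjg, ← Finset.mul_prod_erase g _ hjg, ← mul_assoc, ← sq,
      ← rmk_mul_rmk, rmk_X_sq, rmk_mul_rmk]
  · rw [Finset.prod_insert hjg]

theorem rmk_X_mul_mem_preceqSpan {s : Finset (Fin m)} {i j : Fin m} (hs : ∀ x ∈ s, x < i)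
    (hji : j ≤ i) {Q : Rring m} (hQ : Q ∈ preceqSpan s) :
    rmk (X j) * Q ∈ preceqSpan (insert i s) := by
  have hle : preceqSpan s ≤ (preceqSpan (insert i s)).comap
      (Algebra.lmul (ZMod 2) (Rring m) (rmk (X j))) := by
    refine Submodule.span_le.2 ?_
    rintro _ ⟨g, hg, rfl⟩
    exact Submodule.subset_span ⟨insert j g, preceq_insert_insert_of_forall_lt hg hs hji,
      rmk_X_mul_prod_X j g⟩
  exact hle hQ

noncomputable def ltaVar (a : Fin m → Fin m → ZMod 2) (b : Fin m → ZMod 2) (i : Fin m) :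
    MvPolynomial (Fin m) (ZMod 2) :=
  X i + ∑ j ∈ Finset.univ.filter (· < i), C (a i j) * X j + C (b i)

theorem ltaSubst_X_mul (a : Fin m → Fin m → ZMod 2) (b : Fin m → ZMod 2) (i : Fin m)
    (P : MvPolynomial (Fin m) (ZMod 2)) :
    ltaSubst a b (X i * P) = ltaVar a b i * ltaSubst a b P := by
  rw [ltaSubst, map_mul, aeval_X]
  rfl

theorem rmk_ltaVar_mul_mem_preceqSpan (a : Fin m → Fin m → ZMod 2) (b : Fin m → ZMod 2)
    {s : Finset (Fin m)} {i : Fin m} (hs : ∀ x ∈ s, x < i) {Q : Rring m}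
    (hQ : Q ∈ preceqSpan s) :
    rmk (ltaVar a b i) * Q ∈ preceqSpan (insert i s) := by
  let N := (preceqSpan (insert i s)).comap
    ((Algebra.lmul (ZMod 2) (Rring m)).toLinearMap.flip Q ∘ₗ rmkAlgHom.toLinearMap)
  have hX : ∀ j ≤ i, X j ∈ N := fun j hji => rmk_X_mul_mem_preceqSpan hs hji hQ
  have h1 : 1 ∈ N := Submodule.mem_comap.2 <| by
    simpa using preceqSpan_mono (Finset.subset_insert i s) hQ
  have hP : ltaVar a b i ∈ N := by
    rw [ltaVar, C_eq_smul_one (a := b i)]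
    simp only [C_mul']
    refine add_mem (add_mem (hX i le_rfl) (sum_mem fun j hj => ?_)) (N.smul_mem _ h1)
    exact N.smul_mem _ (hX j (Finset.mem_filter.1 hj).2.le)
  exact hP

theorem rmk_ltaSubst_prod_X_mem_preceqSpan (a : Fin m → Fin m → ZMod 2)
    (b : Fin m → ZMod 2) (f : Finset (Fin m)) :
    rmk (ltaSubst a b (∏ i ∈ f, X i)) ∈ preceqSpan f := by
  induction f using Finset.induction_on_max with
  | empty => exact Submodule.subset_span ⟨∅, preceq_refl ∅, by simp [ltaSubst]⟩
  | insert i s hs ih =>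
    rw [Finset.prod_insert fun hi => lt_irrefl i (hs i hi), ltaSubst_X_mul, ← rmk_mul_rmk]
    exact rmk_ltaVar_mul_mem_preceqSpan a b hs ih

end Rring

/-- substituting a lower triangular affine change of variables into
a square-free monomial `f` yields, in `R_m`, a linear combination of monomials
`g ⪯ f`; in particular, if `I` is decreasing and `f ∈ I`, the result lies in the
span of the (classes of the) monomials of `I`. -/
theorem ltaSubst_mem_span {m : ℕ} (a : Fin m → Fin m → ZMod 2)
    (b : Fin m → ZMod 2) (f : Finset (Fin m)) :
    rmk (ltaSubst a b (∏ i ∈ f, X i)) ∈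
      Submodule.span (ZMod 2) { Q : Rring m | ∃ g, preceq g f ∧ Q = rmk (∏ i ∈ g, X i) } ∧
    ∀ I : Finset (Finset (Fin m)), Decreasing I → f ∈ I →
      rmk (ltaSubst a b (∏ i ∈ f, X i)) ∈
        Submodule.span (ZMod 2) { Q : Rring m | ∃ g ∈ I, Q = rmk (∏ i ∈ g, X i) } := by
  refine ⟨rmk_ltaSubst_prod_X_mem_preceqSpan a b f, fun I hI hf => ?_⟩
  refine Submodule.span_mono ?_ (rmk_ltaSubst_prod_X_mem_preceqSpan a b f)
  rintro _ ⟨g, hg, rfl⟩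
  exact ⟨g, hI f hf g hg, rfl⟩
end

section
/- For any square-free monomial g in m variables, the orbit of g under the action of LTA(m,2) (by substitution of variables) equals the orbit of g under the subgroup LTA(m,2)_g, consisting of (A,b) with b_i = 0 for i ∉ ind(g), a_{ij} = 0 whenever i ∉ ind(g) or j ∈ ind(g). -/
open MvPolynomial

/-- Image of the variable `x_i` under the affine substitution `(A,b)`:
`∑_j a_{ij} x_j + b_i` (which is `x_i + ∑_{j<i} a_{ij} x_j + b_i` when `A` is
lower unitriangular). -/
noncomputable def subVar {m : ℕ} (A : Matrix (Fin m) (Fin m) (ZMod 2))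
    (b : Fin m → ZMod 2) (i : Fin m) : MvPolynomial (Fin m) (ZMod 2) :=
  (∑ j, C (A i j) * X j) + C (b i)

/-- The orbit in `R_m` of the monomial `g` under the action of `LTA(m,2)` by
substitution. -/
noncomputable def orbitLTA {m : ℕ} (g : Finset (Fin m)) : Set (Rring m) :=
  { P | ∃ A b, LowerUni A ∧ P = rmk (∏ i ∈ g, subVar A b i) }

/-- Membership in the subgroup `LTA(m,2)_g`: `b_i = 0` for `i ∉ ind(g)` and
`a_{ij} = 0` (off the diagonal) whenever `i ∉ ind(g)` or `j ∈ ind(g)`. -/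
def stabCond {m : ℕ} (g : Finset (Fin m)) (A : Matrix (Fin m) (Fin m) (ZMod 2))
    (b : Fin m → ZMod 2) : Prop :=
  (∀ i, i ∉ g → b i = 0) ∧
  (∀ i j : Fin m, i ≠ j → (i ∉ g ∨ j ∈ g) → A i j = 0)

/-! In `R_m` every element is idempotent and `2 = 0`, so `u * (u + 1) = 0` for all `u`: a product
`ℓ * ∏ k, u k` is unchanged when `ℓ` is replaced by `ℓ + ∑ k, c k * (u k + 1)`. Induct on `g` by
adjoining its largest index `a`. The forms `ℓ_k`, `k ∈ g`, `k < a`, may already be assumed to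
contain no `x_j` with `j ∈ g`, `j ≠ k`; adding `∑ k, a_{ak} (ℓ_k + 1)` to `ℓ_a` then clears its
coefficients on `g`, and keeps it unitriangular because each `ℓ_k` involves only `x_j` with
`j ≤ k < a`. -/

theorem add_sum_mul_add_one_mul_prod {R ι : Type*} [CommRing R] (s : Finset ι) (x : R)
    (c u : ι → R) (hu : ∀ k ∈ s, u k * (u k + 1) = 0) :
    (x + ∑ k ∈ s, c k * (u k + 1)) * ∏ k ∈ s, u k = x * ∏ k ∈ s, u k := by
  classical
  have hterm : ∀ k ∈ s, c k * (u k + 1) * ∏ l ∈ s, u l = 0 := fun k hk => by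
    rw [← Finset.mul_prod_erase s u hk]
    linear_combination (c k * ∏ l ∈ s.erase k, u l) * hu k hk
  rw [add_mul, Finset.sum_mul, Finset.sum_eq_zero hterm, add_zero]

namespace Rring

variable {m : ℕ}

theorem rmk_add (P Q : MvPolynomial (Fin m) (ZMod 2)) : rmk (P + Q) = rmk P + rmk Q := rfl

theorem rmk_mul (P Q : MvPolynomial (Fin m) (ZMod 2)) : rmk (P * Q) = rmk P * rmk Q := rfl

theorem rmk_one : rmk (1 : MvPolynomial (Fin m) (ZMod 2)) = 1 := rfl

theorem rmk_sum {ι : Type*} (s : Finset ι) (P : ι → MvPolynomial (Fin m) (ZMod 2)) :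
    rmk (∑ i ∈ s, P i) = ∑ i ∈ s, rmk (P i) :=
  map_sum (Ideal.Quotient.mk _) P s

theorem rmk_prod {ι : Type*} (s : Finset ι) (P : ι → MvPolynomial (Fin m) (ZMod 2)) :
    rmk (∏ i ∈ s, P i) = ∏ i ∈ s, rmk (P i) :=
  map_prod (Ideal.Quotient.mk _) P s

theorem two_eq_zero : (2 : Rring m) = 0 := by
  rw [← map_ofNat (algebraMap (ZMod 2) (Rring m)) 2]
  exact (algebraMap (ZMod 2) (Rring m)).map_zero

theorem rmk_mul_self (P : MvPolynomial (Fin m) (ZMod 2)) : rmk P * rmk P = rmk P := by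
  induction P using MvPolynomial.induction_on with
  | C a => rw [← rmk_mul, ← map_mul, show a * a = a by revert a; decide]
  | add p q hp hq =>
    rw [rmk_add]
    linear_combination hp + hq + rmk p * rmk q * two_eq_zero
  | mul_X p i hp =>
    have hX : rmk (X i) * rmk (X i) = rmk (X i) :=
      Ideal.Quotient.eq.2 (Ideal.subset_span ⟨i, by ring⟩)
    rw [rmk_mul]
    linear_combination rmk (X i) * rmk (X i) * hp + rmk p * hX

theorem rmk_mul_add_one_eq_zero (P : MvPolynomial (Fin m) (ZMod 2)) :
    rmk P * (rmk P + 1) = 0 := by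
  linear_combination rmk_mul_self P + rmk P * two_eq_zero

end Rring

section RowReduction

variable {m : ℕ}

theorem lowerUni_one : LowerUni (1 : Matrix (Fin m) (Fin m) (ZMod 2)) :=
  ⟨fun i => Matrix.one_apply_eq i, fun _ _ hij => Matrix.one_apply_ne hij.ne⟩

theorem stabCond_empty_one_zero : stabCond (∅ : Finset (Fin m)) 1 0 :=
  ⟨fun _ _ => rfl, fun _ _ hij _ => Matrix.one_apply_ne hij⟩

def reduceRow (s : Finset (Fin m)) (A B : Matrix (Fin m) (Fin m) (ZMod 2)) (a : Fin m) :
    Fin m → ZMod 2 :=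
  A a + ∑ k ∈ s, A a k • B k

theorem reduceRow_apply (s : Finset (Fin m)) (A B : Matrix (Fin m) (Fin m) (ZMod 2))
    (a j : Fin m) : reduceRow s A B a j = A a j + ∑ k ∈ s, A a k * B k j := by
  simp [reduceRow, Finset.sum_apply]

theorem subVar_updateRow_of_ne (A : Matrix (Fin m) (Fin m) (ZMod 2))
    (b : Fin m → ZMod 2) {a i : Fin m} (hi : i ≠ a) (v : Fin m → ZMod 2) (c : ZMod 2) :
    subVar (A.updateRow a v) (Function.update b a c) i = subVar A b i := by
  simp only [subVar, Matrix.updateRow_ne hi, Function.update_of_ne hi]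

variable {s : Finset (Fin m)} {A B : Matrix (Fin m) (Fin m) (ZMod 2)} {a : Fin m}

theorem reduceRow_apply_of_le (hB : LowerUni B) (hs : ∀ x ∈ s, x < a)
    {j : Fin m} (hj : a ≤ j) : reduceRow s A B a j = A a j := by
  rw [reduceRow_apply, Finset.sum_eq_zero fun k hk => by rw [hB.2 k j ((hs k hk).trans_le hj),
    mul_zero], add_zero]

theorem reduceRow_apply_of_mem (hB : LowerUni B) {b : Fin m → ZMod 2} (hstab : stabCond s B b)
    {j : Fin m} (hj : j ∈ s) : reduceRow s A B a j = 0 := by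
  rw [reduceRow_apply, Finset.sum_eq_single j
    (fun k _ hkj => by rw [hstab.2 k j hkj (Or.inr hj), mul_zero]) (absurd hj), hB.1, mul_one]
  exact CharTwo.add_self_eq_zero _

theorem lowerUni_updateRow_reduceRow (hA : LowerUni A) (hB : LowerUni B) (hs : ∀ x ∈ s, x < a) :
    LowerUni (B.updateRow a (reduceRow s A B a)) := by
  constructor
  · intro i
    rcases eq_or_ne i a with rfl | hi
    · rw [Matrix.updateRow_self, reduceRow_apply_of_le hB hs le_rfl, hA.1]
    · rw [Matrix.updateRow_ne hi, hB.1]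
  · intro i j hij
    rcases eq_or_ne i a with rfl | hi
    · rw [Matrix.updateRow_self, reduceRow_apply_of_le hB hs hij.le, hA.2 i j hij]
    · rw [Matrix.updateRow_ne hi, hB.2 i j hij]

theorem stabCond_insert_updateRow_reduceRow (hB : LowerUni B) (hs : ∀ x ∈ s, x < a)
    {b : Fin m → ZMod 2} (hstab : stabCond s B b) (c : ZMod 2) :
    stabCond (insert a s) (B.updateRow a (reduceRow s A B a)) (Function.update b a c) := by
  constructor
  · intro i hi
    rw [Finset.mem_insert, not_or] at hi
    rw [Function.update_of_ne hi.1, hstab.1 i hi.2]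
  · intro i j hij hcond
    rcases eq_or_ne i a with rfl | hi
    · have hj : j ∈ s := by
        rcases hcond with h | h
        · exact absurd (Finset.mem_insert_self i s) h
        · exact (Finset.mem_insert.1 h).resolve_left hij.symm
      rw [Matrix.updateRow_self, reduceRow_apply_of_mem hB hstab hj]
    · rw [Matrix.updateRow_ne hi]
      by_cases his : i ∈ s
      · rcases eq_or_ne j a with rfl | hja
        · exact hB.2 i j (hs i his)
        · refine hstab.2 i j hij (Or.inr ?_)
          simpa [hja, his] using hcond
      · exact hstab.2 i j hij (Or.inl his)

theorem subVar_updateRow_reduceRow (b b' : Fin m → ZMod 2) :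
    subVar (B.updateRow a (reduceRow s A B a))
        (Function.update b' a (b a + ∑ k ∈ s, A a k * (b' k + 1))) a
      = subVar A b a + ∑ k ∈ s, C (A a k) * (subVar B b' k + 1) := by
  simp only [subVar, Matrix.updateRow_self, Function.update_self, reduceRow_apply, map_add,
    map_sum, map_mul, map_one, add_mul, mul_add, Finset.sum_add_distrib, Finset.sum_mul,
    Finset.mul_sum, mul_assoc]
  rw [Finset.sum_comm (s := s)]
  ring

end RowReduction

open Rring in
theorem exists_lowerUni_stabCond_rmk_prod_eq {m : ℕ} (s : Finset (Fin m))
    (A : Matrix (Fin m) (Fin m) (ZMod 2)) (b : Fin m → ZMod 2) (hA : LowerUni A) :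
    ∃ A' b', LowerUni A' ∧ stabCond s A' b' ∧
      rmk (∏ i ∈ s, subVar A' b' i) = rmk (∏ i ∈ s, subVar A b i) := by
  induction s using Finset.induction_on_max with
  | empty => exact ⟨1, 0, lowerUni_one, stabCond_empty_one_zero, by simp only [Finset.prod_empty]⟩
  | insert a s hs ih =>
    obtain ⟨B, b', hB, hstab, hprod⟩ := ih
    have has : a ∉ s := fun h => lt_irrefl a (hs a h)
    refine ⟨B.updateRow a (reduceRow s A B a),
      Function.update b' a (b a + ∑ k ∈ s, A a k * (b' k + 1)),
      lowerUni_updateRow_reduceRow hA hB hs, stabCond_insert_updateRow_reduceRow hB hs hstab _, ?_⟩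
    rw [Finset.prod_insert has, Finset.prod_insert has,
      Finset.prod_congr rfl fun i hi =>
        subVar_updateRow_of_ne B b' (ne_of_mem_of_not_mem hi has) _ _,
      subVar_updateRow_reduceRow, rmk_mul, rmk_mul, ← hprod, rmk_prod, rmk_add, rmk_sum]
    simp only [rmk_mul, rmk_add, rmk_one]
    exact add_sum_mul_add_one_mul_prod s _ _ _ fun k _ => rmk_mul_add_one_eq_zero _

/-- the orbit of a monomial `g` under `LTA(m,2)` equals its orbit
under the subgroup `LTA(m,2)_g`. -/
theorem orbit_eq_orbit_stab {m : ℕ} (g : Finset (Fin m)) :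
    orbitLTA g =
      { P | ∃ A b, LowerUni A ∧ stabCond g A b ∧ P = rmk (∏ i ∈ g, subVar A b i) } := by
  ext P
  constructor
  · rintro ⟨A, b, hA, rfl⟩
    obtain ⟨A', b', hA', hstab, hprod⟩ := exists_lowerUni_stabCond_rmk_prod_eq g A b hA
    exact ⟨A', b', hA', hstab, hprod.symm⟩
  · rintro ⟨A, b, hA, -, rfl⟩
    exact ⟨A, b, hA, rfl⟩
end

section
/- For any square-free monomial g in m variables, the map (A,b) ↦ (A,b)·g from LTA(m,2)_g to the orbit of g under LTA(m,2) is a bijection; hence |LTA(m,2)·g| = |LTA(m,2)_g|. -/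
open MvPolynomial

/-!
Every element of `R_m` is idempotent, so if `ℓ_j` is one of the affine factors of
`∏_{i ∈ g} ℓ_i`, adding a multiple of `ℓ_j - 1` to another factor leaves the product unchanged.
Clearing the rows of `A` on the columns in `g`, from the smallest index of `g` upwards, therefore
reaches an element of `LTA(m,2)_g` with the same image.

Conversely, read elements of `R_m` as Boolean functions on `𝔽₂^m`. For `(A,b)` in `LTA(m,2)_g`
and `i ∈ g` the factor `ℓ_i` is `x_i + w_i(x)`, where `w_i(x) = ∑_{j ∉ g} a_{ij} x_j + b_i` only
involves coordinates outside `g`. So `(A,b)·g` is the indicator of `{x | x_i = w_i(x) + 1, i ∈ g}`,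
which determines every `w_i`, hence `A` and `b`.
-/

namespace Rring

variable {m : ℕ}

theorem isIdempotentElem (x : Rring m) : IsIdempotentElem x := by
  obtain ⟨P, rfl⟩ : ∃ P, rmk P = x := Ideal.Quotient.mk_surjective x
  induction P using MvPolynomial.induction_on with
  | C a =>
    change rmk (C a * C a) = rmk (C a)
    rw [← map_mul, ← sq, ZMod.pow_card]
  | add P Q hP hQ =>
    change (rmk P + rmk Q) * (rmk P + rmk Q) = rmk P + rmk Q
    linear_combination hP.eq + hQ.eq + rmk P * rmk Q * Rring.two_eq_zero
  | mul_X P i hP =>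
    have hX : IsIdempotentElem (rmk (X i) : Rring m) :=
      Ideal.Quotient.eq.mpr (Ideal.subset_span ⟨i, by ring⟩)
    exact hP.mul hX

noncomputable def mk (m : ℕ) : MvPolynomial (Fin m) (ZMod 2) →+* Rring m := Ideal.Quotient.mk _

theorem rmk_eq_mk (P : MvPolynomial (Fin m) (ZMod 2)) : rmk P = mk m P := rfl

noncomputable def eval (m : ℕ) : Rring m →+* (Fin m → ZMod 2) → ZMod 2 :=
  Ideal.Quotient.lift _ (RingHom.pi fun x => MvPolynomial.eval x) fun P hP => by
    refine RingHom.mem_ker.mp ((Ideal.span_le (I := RingHom.ker _)).mpr ?_ hP)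
    rintro _ ⟨i, rfl⟩
    ext x
    simp [ZMod.pow_card]

theorem eval_rmk (P : MvPolynomial (Fin m) (ZMod 2)) (x : Fin m → ZMod 2) :
    eval m (rmk P) x = MvPolynomial.eval x P := rfl

end Rring

theorem add_sum_mul_sub_one_mul_prod {R ι : Type*} [CommRing R] {s : Finset ι} {e : ι → R}
    (he : ∀ i ∈ s, IsIdempotentElem (e i)) (c : ι → R) (x : R) :
    (x + ∑ j ∈ s, c j * (e j - 1)) * ∏ i ∈ s, e i = x * ∏ i ∈ s, e i := by
  classical
  rw [add_mul, Finset.sum_mul, add_eq_left]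
  refine Finset.sum_eq_zero fun j hj => ?_
  rw [← Finset.mul_prod_erase s e hj, mul_assoc, ← mul_assoc (e j - 1), sub_mul, (he j hj).eq,
    one_mul, sub_self, zero_mul, mul_zero]

section Reduction

variable {m : ℕ}

theorem LowerUni.updateRow {A : Matrix (Fin m) (Fin m) (ZMod 2)} (hA : LowerUni A) {a : Fin m}
    {r : Fin m → ZMod 2} (hra : r a = 1) (hr : ∀ k, a < k → r k = 0) :
    LowerUni (A.updateRow a r) := by
  constructor
  · intro i
    rcases eq_or_ne i a with rfl | hi
    · rwa [Matrix.updateRow_self]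
    · rw [Matrix.updateRow_ne hi, hA.1]
  · intro i j hij
    rcases eq_or_ne i a with rfl | hi
    · rw [Matrix.updateRow_self, hr j hij]
    · rw [Matrix.updateRow_ne hi, hA.2 i j hij]

theorem sum_C_mul_subVar_sub_one (A : Matrix (Fin m) (Fin m) (ZMod 2)) (b : Fin m → ZMod 2)
    (c : Fin m → ZMod 2) (s : Finset (Fin m)) :
    ∑ j ∈ s, C (c j) * (subVar A b j - 1) =
      (∑ k, C (∑ j ∈ s, c j * A j k) * X k) + C (∑ j ∈ s, c j * (b j - 1)) := by
  simp only [subVar, map_sum, map_mul, map_sub, mul_sub, mul_add, Finset.mul_sum,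
    Finset.sum_mul, Finset.sum_add_distrib, Finset.sum_sub_distrib, mul_one]
  rw [Finset.sum_comm]
  simp only [mul_assoc]
  ring

theorem rmk_add_sum_mul_prod_subVar (P : MvPolynomial (Fin m) (ZMod 2))
    (A : Matrix (Fin m) (Fin m) (ZMod 2)) (b c : Fin m → ZMod 2) (s : Finset (Fin m)) :
    rmk ((P + ∑ j ∈ s, C (c j) * (subVar A b j - 1)) * ∏ i ∈ s, subVar A b i) =
      rmk (P * ∏ i ∈ s, subVar A b i) := by
  simp only [Rring.rmk_eq_mk, map_mul, map_add, map_sum, map_sub, map_one, map_prod]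
  exact add_sum_mul_sub_one_mul_prod (fun i _ => Rring.isIdempotentElem _) _ _

theorem exists_lowerUni_offDiag_eq_zero (g : Finset (Fin m)) (A : Matrix (Fin m) (Fin m) (ZMod 2))
    (b : Fin m → ZMod 2) (hA : LowerUni A) :
    ∃ A' b', LowerUni A' ∧ (∀ i ∈ g, ∀ j ∈ g, i ≠ j → A' i j = 0) ∧
      rmk (∏ i ∈ g, subVar A' b' i) = rmk (∏ i ∈ g, subVar A b i) := by
  induction g using Finset.induction_on_max with
  | empty => exact ⟨A, b, hA, by simp, rfl⟩
  | insert a s hlt ih =>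
    obtain ⟨A₁, b₁, hA₁, hA₁s, hprod⟩ := ih
    have has : a ∉ s := fun h => lt_irrefl a (hlt a h)
    have hr : ∀ k, a < k → A a k + ∑ j ∈ s, A a j * A₁ j k = 0 := fun k hk => by
      rw [hA.2 a k hk, zero_add]
      exact Finset.sum_eq_zero fun j hj => by rw [hA₁.2 j k ((hlt j hj).trans hk), mul_zero]
    have hra : A a a + ∑ j ∈ s, A a j * A₁ j a = 1 := by
      rw [hA.1 a, add_eq_left]
      exact Finset.sum_eq_zero fun j hj => by rw [hA₁.2 j a (hlt j hj), mul_zero]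
    -- add `A a j • (ℓ_j - 1)` to `ℓ_a` for every `j ∈ s`, where `ℓ_j = subVar A₁ b₁ j`
    set A₂ := A₁.updateRow a (fun k => A a k + ∑ j ∈ s, A a j * A₁ j k)
    set b₂ := Function.update b₁ a (b a + ∑ j ∈ s, A a j * (b₁ j - 1))
    refine ⟨A₂, b₂, hA₁.updateRow hra hr, ?_, ?_⟩
    · intro i hi j hj hij
      dsimp only [A₂]
      obtain rfl | his := Finset.mem_insert.mp hi
      · have hjs : j ∈ s := (Finset.mem_insert.mp hj).resolve_left hij.symm
        rw [Matrix.updateRow_self, Finset.sum_eq_single j (fun k hk hkj => by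
          rw [hA₁s k hk j hjs hkj, mul_zero]) (fun h => absurd hjs h), hA₁.1 j, mul_one,
          CharTwo.add_self_eq_zero]
      · have hia : i ≠ a := fun h => has (h ▸ his)
        rw [Matrix.updateRow_ne hia]
        obtain rfl | hjs := Finset.mem_insert.mp hj
        · exact hA₁.2 i j (hlt i his)
        · exact hA₁s i his j hjs hij
    · have hrow : subVar A₂ b₂ a = subVar A b a + ∑ j ∈ s, C (A a j) * (subVar A₁ b₁ j - 1) := by
        rw [sum_C_mul_subVar_sub_one]
        simp only [A₂, b₂, subVar, Matrix.updateRow_self, Function.update_self, map_add,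
          add_mul, Finset.sum_add_distrib]
        ring
      have hrest : ∏ i ∈ s, subVar A₂ b₂ i = ∏ i ∈ s, subVar A₁ b₁ i :=
        Finset.prod_congr rfl fun i hi => by
          have hia : i ≠ a := fun h => has (h ▸ hi)
          simp only [A₂, b₂, subVar, Matrix.updateRow_ne hia, Function.update_of_ne hia]
      rw [Finset.prod_insert has, Finset.prod_insert has, hrest, hrow, rmk_add_sum_mul_prod_subVar]
      exact congrArg (rmk (subVar A b a) * ·) hprod

theorem exists_stabCond_rmk_prod_eq (g : Finset (Fin m)) (A : Matrix (Fin m) (Fin m) (ZMod 2))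
    (b : Fin m → ZMod 2) (hA : LowerUni A) :
    ∃ A' b', LowerUni A' ∧ stabCond g A' b' ∧
      rmk (∏ i ∈ g, subVar A' b' i) = rmk (∏ i ∈ g, subVar A b i) := by
  obtain ⟨A₂, b₂, hA₂, hA₂g, hprod⟩ := exists_lowerUni_offDiag_eq_zero g A b hA
  refine ⟨Matrix.of fun i j =>
      if i ∈ g then A₂ i j else (1 : Matrix (Fin m) (Fin m) (ZMod 2)) i j,
    fun i => if i ∈ g then b₂ i else 0, ⟨fun i => ?_, fun i j hij => ?_⟩,
    ⟨fun i hi => ?_, fun i j hij hg => ?_⟩, .trans ?_ hprod⟩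
  · by_cases hi : i ∈ g <;> simp [hi, hA₂.1 i]
  · by_cases hi : i ∈ g <;> simp [hi, hA₂.2 i j hij, hij.ne]
  · simp [hi]
  · by_cases hi : i ∈ g
    · simpa [hi] using hA₂g i hi j (hg.resolve_left (not_not.mpr hi)) hij
    · simp [hi, hij]
  · refine congrArg rmk (Finset.prod_congr rfl fun i hi => ?_)
    simp only [subVar, Matrix.of_apply, if_pos hi]

end Reduction

section Injectivity

open Matrix

variable {m : ℕ}

theorem mulVec_apply_eq_of_stabCond {g : Finset (Fin m)} {A : Matrix (Fin m) (Fin m) (ZMod 2)}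
    {b : Fin m → ZMod 2} (hA : LowerUni A) (hs : stabCond g A b) {i : Fin m} (hi : i ∈ g)
    (x : Fin m → ZMod 2) :
    (A *ᵥ x) i = x i + (A *ᵥ (↑g : Set (Fin m))ᶜ.indicator x) i := by
  conv_lhs => rw [← Set.indicator_self_add_compl (↑g : Set (Fin m)) x]
  rw [Matrix.mulVec_add, Pi.add_apply, add_left_inj, Matrix.mulVec, dotProduct,
    Finset.sum_eq_single i]
  · simp [hA.1 i, hi]
  · intro j _ hji
    by_cases hj : j ∈ g
    · rw [hs.2 i j hji.symm (Or.inr hj), zero_mul]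
    · simp [hj]
  · simp

theorem Rring.eval_rmk_prod_subVar (g : Finset (Fin m)) (A : Matrix (Fin m) (Fin m) (ZMod 2))
    (b : Fin m → ZMod 2) (x : Fin m → ZMod 2) :
    Rring.eval m (rmk (∏ i ∈ g, subVar A b i)) x = ∏ i ∈ g, ((A *ᵥ x) i + b i) := by
  simp [Rring.eval_rmk, subVar, Matrix.mulVec, dotProduct]

theorem affine_apply_eq_of_rmk_prod_eq {g : Finset (Fin m)}
    {A A' : Matrix (Fin m) (Fin m) (ZMod 2)} {b b' : Fin m → ZMod 2}
    (hA : LowerUni A) (hs : stabCond g A b) (hA' : LowerUni A') (hs' : stabCond g A' b')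
    (heq : rmk (∏ i ∈ g, subVar A b i) = rmk (∏ i ∈ g, subVar A' b' i))
    {i : Fin m} (hi : i ∈ g) (y : Fin m → ZMod 2) :
    (A *ᵥ (↑g : Set (Fin m))ᶜ.indicator y) i + b i =
      (A' *ᵥ (↑g : Set (Fin m))ᶜ.indicator y) i + b' i := by
  set w := fun k => (A *ᵥ (↑g : Set (Fin m))ᶜ.indicator y) k + b k
  -- at `p` every factor of `∏ (A x + b)_k` equals `1`, so the same must hold for `(A', b')`
  set p := g.piecewise (fun k => w k + 1) y
  have hp : (↑g : Set (Fin m))ᶜ.indicator p = (↑g : Set (Fin m))ᶜ.indicator y := by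
    ext k
    by_cases hk : k ∈ g <;> simp [p, hk]
  have hpg : ∀ k ∈ g, p k = w k + 1 := fun k hk => Finset.piecewise_eq_of_mem _ _ _ hk
  have hfactor : ∀ k ∈ g, (A *ᵥ p) k + b k = 1 := fun k hk => by
    rw [mulVec_apply_eq_of_stabCond hA hs hk, hp, hpg k hk]
    linear_combination CharTwo.add_self_eq_zero (w k)
  have hne : ∀ k ∈ g, (A' *ᵥ p) k + b' k ≠ 0 := by
    rw [← Finset.prod_ne_zero_iff, ← Rring.eval_rmk_prod_subVar, ← heq,
      Rring.eval_rmk_prod_subVar, Finset.prod_congr rfl hfactor, Finset.prod_const_one]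
    exact one_ne_zero
  have hbool : ∀ u v : ZMod 2, u + 1 + v ≠ 0 → u = v := by decide
  have hi' := hne i hi
  rw [mulVec_apply_eq_of_stabCond hA' hs' hi, hp, hpg i hi, add_assoc] at hi'
  exact hbool _ _ hi'

theorem eq_of_stabCond_of_rmk_prod_eq {g : Finset (Fin m)}
    {A A' : Matrix (Fin m) (Fin m) (ZMod 2)} {b b' : Fin m → ZMod 2}
    (hA : LowerUni A) (hs : stabCond g A b) (hA' : LowerUni A') (hs' : stabCond g A' b')
    (heq : rmk (∏ i ∈ g, subVar A b i) = rmk (∏ i ∈ g, subVar A' b' i)) :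
    A = A' ∧ b = b' := by
  have hw := fun i (hi : i ∈ g) => affine_apply_eq_of_rmk_prod_eq hA hs hA' hs' heq hi
  have hb : b = b' := funext fun i => by
    by_cases hi : i ∈ g
    · simpa using hw i hi 0
    · rw [hs.1 i hi, hs'.1 i hi]
  refine ⟨Matrix.ext fun i j => ?_, hb⟩
  by_cases hij : i = j
  · rw [hij, hA.1, hA'.1]
  by_cases hcase : i ∉ g ∨ j ∈ g
  · rw [hs.2 i j hij hcase, hs'.2 i j hij hcase]
  obtain ⟨hi, hj⟩ : i ∈ g ∧ j ∉ g := by simpa only [not_or, not_not] using hcase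
  have hsingle : (↑g : Set (Fin m))ᶜ.indicator (Pi.single j 1) = Pi.single j (1 : ZMod 2) := by
    ext k
    by_cases hk : k = j
    · simp [hk, hj]
    · simp [hk]
  simpa [hsingle, mulVec_single_one, hb] using hw i hi (Pi.single j 1)

end Injectivity

/-- the map `(A,b) ↦ (A,b)·g` is a bijection from `LTA(m,2)_g`
onto the orbit of `g` under `LTA(m,2)`; hence `|LTA(m,2)·g| = |LTA(m,2)_g|`. -/
theorem orbit_card_eq_stab_card {m : ℕ} (g : Finset (Fin m)) :
    Set.BijOn
      (fun p : Matrix (Fin m) (Fin m) (ZMod 2) × (Fin m → ZMod 2) =>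
        rmk (∏ i ∈ g, subVar p.1 p.2 i))
      { p | LowerUni p.1 ∧ stabCond g p.1 p.2 }
      (orbitLTA g) ∧
    Nat.card (orbitLTA g) =
      Nat.card { p : Matrix (Fin m) (Fin m) (ZMod 2) × (Fin m → ZMod 2) |
        LowerUni p.1 ∧ stabCond g p.1 p.2 } := by
  refine (fun hbij => ⟨hbij, Nat.card_congr (hbij.equiv _).symm⟩) ⟨?_, ?_, ?_⟩
  · exact fun p hp => ⟨p.1, p.2, hp.1, rfl⟩
  · rintro ⟨A, b⟩ ⟨hA, hs⟩ ⟨A', b'⟩ ⟨hA', hs'⟩ heq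
    obtain ⟨rfl, rfl⟩ := eq_of_stabCond_of_rmk_prod_eq hA hs hA' hs' heq
    rfl
  · rintro _ ⟨A, b, hA, rfl⟩
    obtain ⟨A', b', hA', hs', heq⟩ := exists_stabCond_rmk_prod_eq g A b hA
    exact ⟨(A', b'), ⟨hA', hs'⟩, heq⟩
end
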